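/- arXiv:1412.3855 — 2 statements merged into one kernel-verified Lean document; each statement's English description precedes it below -/
import Mathlib

section
/- Let G be a finite simple graph on vertex set V with at least one edge, and let W be any real symmetric V×V matrix with zero diagonal, not identically zero, satisfying W_{uv} = 0 whenever u and v are not adjacent in G (negative entries are allowed). Let λ_max(W) and λ_min(W) denote the largest and smallest eigenvalues of W. Then the chromatic number of G satisfies χ(G) ≥ 1 − λ_max(W)/λ_min(W). -/
/-!
Let `x` be a unit eigenvector of `W` for `λ_max` and `x_j` its restriction to the `j`-th colour
class. As `W` vanishes on each class, `x_jᵀ W x_j = 0`; the Rayleigh bound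
`λ_min ‖w‖² ≤ wᵀ W w` at `w = x - k x_j`, summed over the `k` classes, gives
`(k² - k) λ_min ≤ -k λ_max`, that is `λ_max + (k - 1) λ_min ≤ 0`.
-/

open Matrix Finset

namespace Matrix.IsHermitian

variable {n : Type*} [Fintype n] [DecidableEq n] {A : Matrix n n ℝ}

open scoped MatrixOrder in
theorem iInf_eigenvalues_mul_dotProduct_self_le (hA : A.IsHermitian) (y : n → ℝ) :
    (⨅ i, hA.eigenvalues i) * (y ⬝ᵥ y) ≤ y ⬝ᵥ A *ᵥ y := by
  have hle : algebraMap ℝ (Matrix n n ℝ) (⨅ i, hA.eigenvalues i) ≤ A := by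
    rw [algebraMap_le_iff_le_spectrum, hA.spectrum_real_eq_range_eigenvalues]
    rintro _ ⟨i, rfl⟩
    exact ciInf_le (Set.finite_range _).bddBelow i
  have := (Matrix.le_iff.mp hle).dotProduct_mulVec_nonneg y
  simpa [sub_mulVec, Algebra.algebraMap_eq_smul_one, smul_mulVec, dotProduct_smul] using this

omit [DecidableEq n] in
theorem dotProduct_mulVec_comm (hA : A.IsHermitian) (x y : n → ℝ) :
    x ⬝ᵥ A *ᵥ y = A *ᵥ x ⬝ᵥ y := by
  rw [dotProduct_mulVec, ← mulVec_transpose, ← conjTranspose_eq_transpose_of_trivial, hA]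

theorem exists_dotProduct_self_eq_one_mulVec_eq_iSup_eigenvalues_smul [Nonempty n]
    (hA : A.IsHermitian) : ∃ x : n → ℝ, x ⬝ᵥ x = 1 ∧ A *ᵥ x = (⨆ i, hA.eigenvalues i) • x := by
  obtain ⟨i, hi⟩ := Finite.exists_max hA.eigenvalues
  refine ⟨hA.eigenvectorBasis i, ?_, ?_⟩
  · have h := orthonormal_iff_ite.mp hA.eigenvectorBasis.orthonormal i i
    rwa [if_pos rfl, EuclideanSpace.inner_eq_star_dotProduct, star_trivial] at h
  · rw [hA.mulVec_eigenvectorBasis,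
      le_antisymm (ciSup_le hi) (le_ciSup (Set.finite_range _).bddAbove i)]

/-- The Rayleigh bound at `x - k • y`. -/
theorem iInf_eigenvalues_bound_sub_smul (hA : A.IsHermitian) {x y : n → ℝ} {M : ℝ}
    (hx : A *ᵥ x = M • x) (hxx : x ⬝ᵥ x = 1) (hyx : y ⬝ᵥ x = y ⬝ᵥ y)
    (hyAy : y ⬝ᵥ A *ᵥ y = 0) (k : ℝ) :
    (⨅ i, hA.eigenvalues i) * (1 + (k ^ 2 - 2 * k) * (y ⬝ᵥ y)) ≤
      M * (1 - 2 * k * (y ⬝ᵥ y)) := by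
  have hxAx : x ⬝ᵥ A *ᵥ x = M := by rw [hx, dotProduct_smul, hxx, smul_eq_mul, mul_one]
  have hxAy : x ⬝ᵥ A *ᵥ y = M * (y ⬝ᵥ y) := by
    rw [hA.dotProduct_mulVec_comm, hx, smul_dotProduct, dotProduct_comm, hyx, smul_eq_mul]
  have hyAx : y ⬝ᵥ A *ᵥ x = M * (y ⬝ᵥ y) := by rw [hx, dotProduct_smul, hyx, smul_eq_mul]
  have hxy : x ⬝ᵥ y = y ⬝ᵥ y := by rw [dotProduct_comm, hyx]
  have h := hA.iInf_eigenvalues_mul_dotProduct_self_le (x - k • y)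
  simp only [mulVec_sub, mulVec_smul, sub_dotProduct, dotProduct_sub, smul_dotProduct,
    dotProduct_smul, smul_eq_mul, hxAx, hxAy, hyAx, hyAy, hxx, hxy, hyx] at h
  linear_combination h

theorem iSup_eigenvalues_add_mul_iInf_eigenvalues_nonpos [Nonempty n] (hA : A.IsHermitian)
    {ι : Type*} [Fintype ι] (c : n → ι) (hc : ∀ u v, c u = c v → A u v = 0) :
    (⨆ i, hA.eigenvalues i) + (Fintype.card ι - 1) * (⨅ i, hA.eigenvalues i) ≤ 0 := by
  classical
  obtain ⟨x, hxx, hx⟩ := hA.exists_dotProduct_self_eq_one_mulVec_eq_iSup_eigenvalues_smul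
  set M := ⨆ i, hA.eigenvalues i
  set L := ⨅ i, hA.eigenvalues i
  set k : ℝ := (Fintype.card ι : ℝ)
  set y : ι → n → ℝ := fun j v => if c v = j then x v else 0
  have hyx (j : ι) : y j ⬝ᵥ x = y j ⬝ᵥ y j :=
    Finset.sum_congr rfl fun v _ => by by_cases h : c v = j <;> simp [y, h]
  have hyAy (j : ι) : y j ⬝ᵥ A *ᵥ y j = 0 := by
    simp only [dotProduct, mulVec, Finset.mul_sum]
    refine sum_eq_zero fun u _ => sum_eq_zero fun v _ => ?_
    by_cases hu : c u = j
    · by_cases hv : c v = j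
      · simp [hc u v (hu.trans hv.symm)]
      · simp [y, hv]
    · simp [y, hu]
  have hsum : ∑ j, y j ⬝ᵥ y j = 1 := by
    rw [← hxx, ← Finset.sum_congr rfl fun j _ => hyx j, ← sum_dotProduct]
    congr 1
    ext v
    simp [y]
  have : Nonempty ι := ⟨c (Classical.arbitrary n)⟩
  have hk : 0 < k := by simp [k, Fintype.card_pos]
  have key := Finset.sum_le_sum fun j (_ : j ∈ univ) =>
    hA.iInf_eigenvalues_bound_sub_smul hx hxx (hyx j) (hyAy j) k
  simp only [mul_add, mul_sub, mul_one, Finset.sum_add_distrib, Finset.sum_sub_distrib,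
    ← Finset.mul_sum, hsum, Finset.sum_const, card_univ, nsmul_eq_mul] at key
  have hmul : k * (M + (k - 1) * L) ≤ 0 := by linear_combination key
  exact nonpos_of_mul_nonpos_right hmul hk

end Matrix.IsHermitian

theorem one_sub_div_le_of_add_mul_nonpos {L M k : ℝ} (hk : 1 ≤ k) (hLM : L ≤ M)
    (h : M + (k - 1) * L ≤ 0) : 1 - M / L ≤ k := by
  rcases lt_trichotomy L 0 with hL | rfl | hL
  · rw [sub_le_comm, le_div_iff_of_neg hL]
    linarith
  · -- `M / 0 = 0`
    simpa using hk
  · nlinarith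

theorem hoffman_lovasz_general {V : Type*} [Fintype V] [DecidableEq V] (G : SimpleGraph V)
    (hedge : ∃ u v, G.Adj u v)
    (W : Matrix V V ℝ) (hW : W.IsHermitian)
    (hsupp : ∀ u v, ¬ G.Adj u v → W u v = 0) :
    ∀ k : ℕ, G.Colorable k →
      1 - (⨆ v, hW.eigenvalues v) / (⨅ v, hW.eigenvalues v) ≤ (k : ℝ) := by
  rintro k ⟨C⟩
  obtain ⟨u, -, -⟩ := hedge
  have : Nonempty V := ⟨u⟩
  have hC (a b : V) (hab : C a = C b) : W a b = 0 :=
    hsupp a b fun hadj => C.valid hadj hab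
  have hbound := hW.iSup_eigenvalues_add_mul_iInf_eigenvalues_nonpos C hC
  rw [Fintype.card_fin] at hbound
  exact one_sub_div_le_of_add_mul_nonpos (by exact_mod_cast Fin.pos (C u))
    (ciInf_le_ciSup (Set.finite_range _).bddBelow (Set.finite_range _).bddAbove) hbound

/-- **Hoffman–Lovász theorem.** For a finite simple graph `G` with at least one edge and any
weighted adjacency matrix `W` of `G` (real symmetric, zero diagonal, nonzero, supported on the
edges of `G`, negative entries allowed), the chromatic number of `G` satisfies
`χ(G) ≥ 1 - λ_max(W) / λ_min(W)`.  (Stated via: every proper `k`-coloring forces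
`k ≥ 1 - λ_max(W) / λ_min(W)`.) -/
theorem hoffman_lovasz {V : Type*} [Fintype V] [DecidableEq V] (G : SimpleGraph V)
    (hedge : ∃ u v, G.Adj u v)
    (W : Matrix V V ℝ) (hW : W.IsHermitian)
    (hdiag : ∀ v, W v v = 0) (hW0 : W ≠ 0)
    (hsupp : ∀ u v, ¬ G.Adj u v → W u v = 0) :
    ∀ k : ℕ, G.Colorable k →
      1 - (⨆ v, hW.eigenvalues v) / (⨅ v, hW.eigenvalues v) ≤ (k : ℝ) :=
  hoffman_lovasz_general G hedge W hW hsupp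
end

section
/- Let A be a V×V symmetric matrix with nonnegative integer entries and zero diagonal, not identically zero (the adjacency matrix of a multigraph G on n = |V| vertices), let |E| = (1/2)·Σ_{u,v} A_{uv} be the number of edges, let d̄ = 2|E|/n be the average degree, and let λ_min be the smallest eigenvalue of A. Suppose k ≥ 2 and there exists a (not necessarily proper) coloring g : V → {1,...,k} whose number of monochromatic edges, (1/2)·Σ_{u,v : g(u)=g(v)} A_{uv}, is at most p·|E| for some real p ≥ 0. Then p ≥ (d̄ + (k−1)·λ_min)/(d̄·k); equivalently, λ_min ≤ d̄(pk − 1)/(k − 1). -/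
/-!
Colour with `g : V → ι`, `k = |ι|`, and take the `k` test vectors `x_i = k·𝟙[g = i] - 1`. They
satisfy `∑_i x_i(u) x_i(v) = k (k·[g u = g v] - 1)`, so summing the Rayleigh bound
`λ_min ‖x_i‖² ≤ x_iᵀ A x_i` over the colours gives `λ_min · n (k - 1) ≤ k M - S`, where `M` is the
monochromatic weight and `S = 2|E|`. With `M ≤ p S` and `d̄ = S / n` this is the claim.
-/
open Matrix Finset

theorem Matrix.IsHermitian.iInf_eigenvalues_mul_dotProduct_self_le_s2 {V : Type*} [Fintype V]
    [DecidableEq V] {A : Matrix V V ℝ} (hA : A.IsHermitian) (x : V → ℝ) :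
    (⨅ i, hA.eigenvalues i) * (x ⬝ᵥ x) ≤ x ⬝ᵥ (A *ᵥ x) := by
  set U : Matrix V V ℝ := (hA.eigenvectorUnitary : Matrix V V ℝ)
  set y : V → ℝ := star U *ᵥ x with hy
  have hyx : y = x ᵥ* U := by
    rw [hy, star_eq_conjTranspose, conjTranspose_eq_transpose_of_trivial, mulVec_transpose]
  have hy_norm : y ⬝ᵥ y = x ⬝ᵥ x := by
    rw [hyx, ← dotProduct_mulVec, ← hyx, mulVec_mulVec,
      mem_unitaryGroup_iff.mp hA.eigenvectorUnitary.2, one_mulVec]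
  have hy_quad : x ⬝ᵥ (A *ᵥ x) = ∑ i, hA.eigenvalues i * (y i * y i) := by
    conv_lhs => rw [hA.spectral_theorem, Unitary.conjStarAlgAut_apply]
    rw [← mulVec_mulVec, ← mulVec_mulVec, dotProduct_mulVec, ← hyx]
    simp only [dotProduct, mulVec_diagonal, Function.comp_apply, RCLike.ofReal_real_eq_id, id_eq]
    exact sum_congr rfl fun i _ => by ring
  rw [← hy_norm, hy_quad, dotProduct, mul_sum]
  exact sum_le_sum fun i _ => mul_le_mul_of_nonneg_right
    (ciInf_le (Set.finite_range _).bddBelow i) (mul_self_nonneg _)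

section ColoringTestVector

variable {V ι : Type*} [Fintype ι] [DecidableEq ι]

def coloringTestVector (g : V → ι) (i : ι) (v : V) : ℝ :=
  Fintype.card ι * (if g v = i then 1 else 0) - 1

theorem sum_coloringTestVector_mul (g : V → ι) (u v : V) :
    ∑ i, coloringTestVector g i u * coloringTestVector g i v =
      Fintype.card ι * (Fintype.card ι * (if g u = g v then 1 else 0) - 1) := by
  have hsingle : ∀ w : V, ∑ i, (if g w = i then (1 : ℝ) else 0) = 1 := fun w => by simp
  have hpair : ∑ i, (if g u = i then (1 : ℝ) else 0) * (if g v = i then 1 else 0) =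
      if g u = g v then 1 else 0 := by
    rw [sum_boole_mul]; simp [eq_comm]
  simp only [coloringTestVector, sub_mul, mul_sub, sum_sub_distrib, mul_one, one_mul,
    sum_const, card_univ, nsmul_eq_mul]
  simp only [mul_mul_mul_comm, ← mul_sum, hsingle, hpair]
  ring

variable [Fintype V]

theorem sum_dotProduct_self_coloringTestVector (g : V → ι) :
    ∑ i, coloringTestVector g i ⬝ᵥ coloringTestVector g i =
      Fintype.card V * (Fintype.card ι * (Fintype.card ι - 1)) := by
  simp only [dotProduct]
  rw [sum_comm]
  simp only [sum_coloringTestVector_mul, if_true, mul_one, sum_const, card_univ, nsmul_eq_mul]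

theorem sum_dotProduct_mulVec_coloringTestVector (A : Matrix V V ℝ) (g : V → ι) :
    ∑ i, coloringTestVector g i ⬝ᵥ (A *ᵥ coloringTestVector g i) =
      Fintype.card ι * (Fintype.card ι * ∑ u, ∑ v, (if g u = g v then A u v else 0) -
        ∑ u, ∑ v, A u v) := by
  have hentry : ∀ u v, ∑ i, coloringTestVector g i u * (A u v * coloringTestVector g i v) =
      Fintype.card ι * (Fintype.card ι * (if g u = g v then A u v else 0) - A u v) := by
    intro u v
    simp only [mul_left_comm _ (A u v), ← mul_sum, sum_coloringTestVector_mul]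
    split_ifs <;> ring
  calc ∑ i, coloringTestVector g i ⬝ᵥ (A *ᵥ coloringTestVector g i)
      = ∑ u, ∑ v, ∑ i, coloringTestVector g i u * (A u v * coloringTestVector g i v) := by
        simp only [dotProduct, mulVec, mul_sum]
        rw [sum_comm]
        exact sum_congr rfl fun u _ => sum_comm
    _ = _ := by simp only [hentry, ← mul_sum, sum_sub_distrib]

end ColoringTestVector

theorem Matrix.IsHermitian.iInf_eigenvalues_mul_le_of_coloring {V ι : Type*} [Fintype V]
    [DecidableEq V] [Fintype ι] [DecidableEq ι] {A : Matrix V V ℝ} (hA : A.IsHermitian)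
    (g : V → ι) :
    (⨅ i, hA.eigenvalues i) * (Fintype.card V * (Fintype.card ι - 1)) ≤
      Fintype.card ι * ∑ u, ∑ v, (if g u = g v then A u v else 0) - ∑ u, ∑ v, A u v := by
  rcases isEmpty_or_nonempty V with _ | ⟨⟨v⟩⟩
  · simp
  have hι : (0 : ℝ) < Fintype.card ι := by exact_mod_cast Fintype.card_pos_iff.mpr ⟨g v⟩
  refine le_of_mul_le_mul_left ?_ hι
  calc (Fintype.card ι : ℝ) * ((⨅ i, hA.eigenvalues i) * (Fintype.card V * (Fintype.card ι - 1)))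
      = ∑ i, (⨅ i, hA.eigenvalues i) * (coloringTestVector g i ⬝ᵥ coloringTestVector g i) := by
        rw [← mul_sum, sum_dotProduct_self_coloringTestVector]; ring
    _ ≤ ∑ i, coloringTestVector g i ⬝ᵥ (A *ᵥ coloringTestVector g i) :=
        sum_le_sum fun i _ => hA.iInf_eigenvalues_mul_dotProduct_self_le_s2 _
    _ = _ := sum_dotProduct_mulVec_coloringTestVector A g

theorem Matrix.sum_sum_pos_of_nonneg_of_ne_zero {m n : Type*} [Fintype m] [Fintype n]
    {A : Matrix m n ℝ} (hnonneg : ∀ i j, 0 ≤ A i j) (hA : A ≠ 0) : 0 < ∑ i, ∑ j, A i j := by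
  obtain ⟨i, j, hij⟩ : ∃ i j, A i j ≠ 0 := by simpa [← Matrix.ext_iff] using hA
  exact sum_pos' (fun i _ => sum_nonneg fun j _ => hnonneg i j)
    ⟨i, mem_univ i, sum_pos' (fun j _ => hnonneg i j) ⟨j, mem_univ j, (hnonneg i j).lt_of_ne' hij⟩⟩

theorem coloring_with_conflicts_general {V : Type*} [Fintype V] [DecidableEq V]
    (A : Matrix V V ℝ) (hA : A.IsHermitian)
    (hnat : ∀ u v, ∃ m : ℕ, A u v = (m : ℝ))
    (hA0 : A ≠ 0)
    (k : ℕ) (hk : 2 ≤ k) (p : ℝ) (g : V → Fin k)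
    (hmono : (1 / 2) * (∑ u, ∑ v, if g u = g v then A u v else 0) ≤
      p * ((1 / 2) * ∑ u, ∑ v, A u v)) :
    ((2 * ((1 / 2) * ∑ u, ∑ v, A u v) / (Fintype.card V : ℝ)) +
        ((k : ℝ) - 1) * (⨅ v, hA.eigenvalues v)) /
      ((2 * ((1 / 2) * ∑ u, ∑ v, A u v) / (Fintype.card V : ℝ)) * k) ≤ p ∧
    (⨅ v, hA.eigenvalues v) ≤
      (2 * ((1 / 2) * ∑ u, ∑ v, A u v) / (Fintype.card V : ℝ)) * (p * k - 1) / ((k : ℝ) - 1) := by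
  set S := ∑ u, ∑ v, A u v
  have hS : 0 < S := sum_sum_pos_of_nonneg_of_ne_zero
    (fun u v => by obtain ⟨m, hm⟩ := hnat u v; exact hm ▸ m.cast_nonneg) hA0
  have : Nonempty V := by
    by_contra h
    rw [not_nonempty_iff] at h
    exact hA0 (Subsingleton.elim _ _)
  have hn : (0 : ℝ) < Fintype.card V := by exact_mod_cast Fintype.card_pos
  have hk1 : (1 : ℝ) < k := by exact_mod_cast hk
  have hspec := hA.iInf_eigenvalues_mul_le_of_coloring g
  rw [Fintype.card_fin] at hspec
  have hd : 2 * (1 / 2 * S) = S := by ring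
  have hbound : ((k : ℝ) - 1) * (⨅ v, hA.eigenvalues v) ≤ S / Fintype.card V * (p * k - 1) := by
    rw [div_mul_eq_mul_div, le_div_iff₀ hn]
    linear_combination hspec + (2 * k : ℝ) * hmono
  rw [hd]
  constructor
  · rw [div_le_iff₀ (by positivity)]
    linear_combination hbound
  · rw [le_div_iff₀ (by linarith)]
    linear_combination hbound

/-- **Lemma on colorings with few conflicts.** Let `A` be the adjacency matrix of a multigraph
(symmetric, nonnegative integer entries, zero diagonal, not identically zero) on the finite
vertex set `V`, with `|E| = (1/2)·Σ A_{uv}` edges, average degree `d̄ = 2|E|/n`, and smallest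
eigenvalue `λ_min`.  If `k ≥ 2` and some (not necessarily proper) `k`-coloring has at most
`p·|E|` monochromatic edges (`p ≥ 0`), then `p ≥ (d̄ + (k-1)·λ_min)/(d̄·k)`; equivalently,
`λ_min ≤ d̄·(pk - 1)/(k - 1)`. -/
theorem coloring_with_conflicts {V : Type*} [Fintype V] [DecidableEq V]
    (A : Matrix V V ℝ) (hA : A.IsHermitian)
    (hnat : ∀ u v, ∃ m : ℕ, A u v = (m : ℝ))
    (hdiag : ∀ v, A v v = 0) (hA0 : A ≠ 0)
    (k : ℕ) (hk : 2 ≤ k) (p : ℝ) (hp : 0 ≤ p) (g : V → Fin k)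
    (hmono : (1 / 2) * (∑ u, ∑ v, if g u = g v then A u v else 0) ≤
      p * ((1 / 2) * ∑ u, ∑ v, A u v)) :
    ((2 * ((1 / 2) * ∑ u, ∑ v, A u v) / (Fintype.card V : ℝ)) +
        ((k : ℝ) - 1) * (⨅ v, hA.eigenvalues v)) /
      ((2 * ((1 / 2) * ∑ u, ∑ v, A u v) / (Fintype.card V : ℝ)) * k) ≤ p ∧
    (⨅ v, hA.eigenvalues v) ≤
      (2 * ((1 / 2) * ∑ u, ∑ v, A u v) / (Fintype.card V : ℝ)) * (p * k - 1) / ((k : ℝ) - 1) :=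
  coloring_with_conflicts_general A hA hnat hA0 k hk p g hmono
end
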